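/- Let (Z, d) be a compact metric space and let (𝔪_n)_{n∈ℕ} and 𝔪_∞ be finite Borel measures on Z with 𝔪_n ⇀ 𝔪_∞ weakly. Let p, q ∈ (1,∞) with 1/p + 1/q = 1. Suppose a sequence of Borel functions u_n ∈ L^q(𝔪_n) converges L^q-strongly to u_∞ ∈ L^q(𝔪_∞), and a sequence v_n ∈ L^p(𝔪_n) converges L^p-weakly to v_∞ ∈ L^p(𝔪_∞). Then lim_{n→∞} ∫ u_n v_n d𝔪_n = ∫ u_∞ v_∞ d𝔪_∞. -/

import Mathlib

/-!
Approximate `uL` in `L^q(m)` by a continuous `φ`. By Hölder, `∫ u n * v n - ∫ φ * v n` is at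
most `‖u n - φ‖_{L^q(mn n)}` times the uniform bound on `‖v n‖_{L^p(mn n)}`, and likewise for
`∫ uL * vL - ∫ φ * vL`, while `∫ φ * v n → ∫ φ * vL` by weak convergence.

The crux is that strong convergence makes `limsup ‖u n - φ‖_{L^q(mn n)}` small. The Bregman
divergence `D(a, b) = |a|^q - |b|^q - q |b|^(q-2) b (a - b)` of the strictly convex `|·|^q`
integrates to an expression that is linear in `u n` except for `∫ |u n|^q`, so
`limsup ∫ D(u n, φ) d(mn n) ≤ ∫ D(uL, φ) dm`, which is small when `φ` is close to `uL`. Both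
`D` and `|a - b|^q` are continuous, `q`-homogeneous and vanish exactly on the diagonal, so by
compactness of the unit sphere each is bounded by `ε |a|^q` plus a multiple of the other.
-/

open MeasureTheory Filter

/-- Weak convergence of measures on a topological space, in duality with continuous
(bounded, as `Z` will be compact) functions. -/
def WeakConvMeasures {Z : Type*} [TopologicalSpace Z] [MeasurableSpace Z]
    (mn : ℕ → Measure Z) (m : Measure Z) : Prop :=
  ∀ φ : Z → ℝ, Continuous φ →
    Tendsto (fun n => ∫ x, φ x ∂(mn n)) atTop (nhds (∫ x, φ x ∂m))

/-- `L^p`-weak convergence of functions `u n ∈ L^p(mn n)` to `uL ∈ L^p(m)` with varying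
reference measures: uniformly bounded `L^p`-norms and `u n · (mn n) ⇀ uL · m` in duality
with continuous functions. -/
def LpWeakConv {Z : Type*} [TopologicalSpace Z] [MeasurableSpace Z] (p : ℝ)
    (mn : ℕ → Measure Z) (m : Measure Z) (u : ℕ → Z → ℝ) (uL : Z → ℝ) : Prop :=
  (∃ M : ℝ, ∀ n, (∫ x, |u n x| ^ p ∂(mn n)) ^ (1 / p) ≤ M) ∧
  ∀ φ : Z → ℝ, Continuous φ →
    Tendsto (fun n => ∫ x, φ x * u n x ∂(mn n)) atTop (nhds (∫ x, φ x * uL x ∂m))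

/-- `L^p`-strong convergence with varying reference measures: `L^p`-weak convergence plus
`limsup_n ‖u n‖_{L^p(mn n)} ≤ ‖uL‖_{L^p(m)}`. -/
def LpStrongConv {Z : Type*} [TopologicalSpace Z] [MeasurableSpace Z] (p : ℝ)
    (mn : ℕ → Measure Z) (m : Measure Z) (u : ℕ → Z → ℝ) (uL : Z → ℝ) : Prop :=
  LpWeakConv p mn m u uL ∧
    limsup (fun n => (∫ x, |u n x| ^ p ∂(mn n)) ^ (1 / p)) atTop ≤
      (∫ x, |uL x| ^ p ∂m) ^ (1 / p)

open Set
open scoped ENNReal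

noncomputable def bregmanDiv (f : ℝ → ℝ) (a b : ℝ) : ℝ := f a - f b - deriv f b * (a - b)

section Bregman

variable {f : ℝ → ℝ}

@[simp]
lemma bregmanDiv_self (a : ℝ) : bregmanDiv f a a = 0 := by
  simp [bregmanDiv]

lemma StrictConvexOn.bregmanDiv_pos (hf : StrictConvexOn ℝ univ f) (hd : Differentiable ℝ f)
    {a b : ℝ} (hab : a ≠ b) : 0 < bregmanDiv f a b := by
  rw [bregmanDiv, sub_pos]
  rcases hab.lt_or_gt with h | h
  · have := hf.slope_lt_deriv (mem_univ a) (mem_univ b) h (hd b)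
    rw [slope_def_field, div_lt_iff₀ (sub_pos.2 h)] at this
    linarith
  · have := hf.deriv_lt_slope (mem_univ b) (mem_univ a) h (hd b)
    rw [slope_def_field, lt_div_iff₀ (sub_pos.2 h)] at this
    linarith

lemma StrictConvexOn.bregmanDiv_nonneg (hf : StrictConvexOn ℝ univ f) (hd : Differentiable ℝ f)
    (a b : ℝ) : 0 ≤ bregmanDiv f a b := by
  rcases eq_or_ne a b with rfl | hab
  · simp
  · exact (hf.bregmanDiv_pos hd hab).le

lemma ContDiff.continuous_bregmanDiv (hf : ContDiff ℝ 1 f) :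
    Continuous fun x : ℝ × ℝ => bregmanDiv f x.1 x.2 := by
  have := hf.continuous
  have := hf.continuous_deriv le_rfl
  unfold bregmanDiv
  fun_prop

end Bregman

theorem exists_le_mul_add_mul_of_homogeneous {E : Type*} [NormedAddCommGroup E]
    [NormedSpace ℝ E] [ProperSpace E] {q ε : ℝ} {F G H : E → ℝ} (hq : 0 < q)
    (hF : Continuous F) (hG : Continuous G) (hH : Continuous H)
    (hFhom : ∀ t > 0, ∀ x, F (t • x) = t ^ q * F x)
    (hGhom : ∀ t > 0, ∀ x, G (t • x) = t ^ q * G x)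
    (hHhom : ∀ t > 0, ∀ x, H (t • x) = t ^ q * H x)
    (hG0 : ∀ x, 0 ≤ G x) (hH0 : ∀ x, 0 ≤ H x)
    (hFG : ∀ x ≠ 0, G x = 0 → F x ≤ 0 ∧ 0 < H x) (hε : 0 < ε) :
    ∃ C, 0 ≤ C ∧ ∀ x, F x ≤ ε * H x + C * G x := by
  -- `G > 0` on the compact part `K` of the unit sphere where `F ≥ ε H`, so `F / G` is bounded
  -- there; homogeneity carries the bound from the sphere to all of `E`.
  set K := Metric.sphere (0 : E) 1 ∩ {x | ε * H x ≤ F x}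
  have hK : IsCompact K := (isCompact_sphere 0 1).inter_right (isClosed_le (by fun_prop) hF)
  have hGK : ∀ x ∈ K, 0 < G x := by
    rintro x ⟨hx, hFx : ε * H x ≤ F x⟩
    refine (hG0 x).lt_of_ne' fun hGx => ?_
    obtain ⟨hFx₀, hHx⟩ := hFG x (ne_zero_of_mem_unit_sphere ⟨x, hx⟩) hGx
    nlinarith
  obtain ⟨C₀, hC₀⟩ := hK.bddAbove_image (f := fun x => F x / G x)
    (hF.continuousOn.div hG.continuousOn fun x hx => (hGK x hx).ne')
  refine ⟨max C₀ 0, le_max_right _ _, fun x => ?_⟩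
  have hsphere : ∀ y ∈ Metric.sphere (0 : E) 1, F y ≤ ε * H y + max C₀ 0 * G y := by
    intro y hy
    by_cases hyK : ε * H y ≤ F y
    · have hGy := hGK y ⟨hy, hyK⟩
      have : F y / G y ≤ max C₀ 0 := (hC₀ ⟨y, ⟨hy, hyK⟩, rfl⟩).trans (le_max_left _ _)
      rw [div_le_iff₀ hGy] at this
      nlinarith [hH0 y]
    · nlinarith [hG0 y, le_max_right C₀ 0]
  rcases eq_or_ne x 0 with rfl | hx
  · have hF0 : F 0 = 0 := by
      have h := hFhom 2 two_pos 0
      rw [smul_zero] at h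
      have := Real.one_lt_rpow (x := 2) one_lt_two hq
      nlinarith
    nlinarith [hG0 0, hH0 0, le_max_right C₀ 0]
  · have hnx : 0 < ‖x‖ := norm_pos_iff.2 hx
    have hxy : x = ‖x‖ • (‖x‖⁻¹ • x) := by rw [smul_smul, mul_inv_cancel₀ hnx.ne', one_smul]
    have hy : ‖x‖⁻¹ • x ∈ Metric.sphere (0 : E) 1 := by
      rw [mem_sphere_zero_iff_norm, norm_smul, norm_inv, norm_norm, inv_mul_cancel₀ hnx.ne']
    rw [hxy, hFhom _ hnx, hGhom _ hnx, hHhom _ hnx]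
    have := mul_le_mul_of_nonneg_left (hsphere _ hy) (Real.rpow_nonneg hnx.le q)
    linarith

section AbsRpow

variable {q : ℝ}

lemma deriv_abs_rpow (hq : 1 < q) (x : ℝ) :
    deriv (fun x : ℝ => |x| ^ q) x = q * |x| ^ (q - 2) * x :=
  (hasDerivAt_abs_rpow x hq).deriv

lemma contDiff_abs_rpow (hq : 1 < q) : ContDiff ℝ 1 fun x : ℝ => |x| ^ q := by
  simpa using contDiff_norm_rpow (E := ℝ) hq

lemma strictConvexOn_abs_rpow (hq : 1 < q) : StrictConvexOn ℝ univ fun x : ℝ => |x| ^ q := by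
  refine StrictMono.strictConvexOn_univ_of_deriv (contDiff_abs_rpow hq).continuous ?_
  rw [funext (deriv_abs_rpow hq)]
  refine strictMono_of_odd_strictMonoOn_nonneg (fun x => by simp)
    fun x (hx : 0 ≤ x) y (hy : 0 ≤ y) hxy => ?_
  have key : ∀ z : ℝ, 0 ≤ z → q * |z| ^ (q - 2) * z = q * z ^ (q - 1) := by
    intro z hz
    rcases hz.eq_or_lt with rfl | hz
    · simp [Real.zero_rpow (by linarith : q - 1 ≠ 0)]
    · rw [abs_of_pos hz, mul_assoc, ← Real.rpow_add_one hz.ne']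
      ring_nf
  rw [key x hx, key y hy]
  exact mul_lt_mul_of_pos_left (Real.rpow_lt_rpow hx hxy (by linarith)) (by linarith)

lemma abs_mul_rpow_of_nonneg {t : ℝ} (ht : 0 ≤ t) (a : ℝ) : |t * a| ^ q = t ^ q * |a| ^ q := by
  rw [abs_mul, abs_of_nonneg ht, Real.mul_rpow ht (abs_nonneg a)]

lemma bregmanDiv_abs_rpow_mul (hq : 1 < q) {t : ℝ} (ht : 0 < t) (a b : ℝ) :
    bregmanDiv (fun x => |x| ^ q) (t * a) (t * b) = t ^ q * bregmanDiv (fun x => |x| ^ q) a b := by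
  simp only [bregmanDiv, deriv_abs_rpow hq, abs_mul_rpow_of_nonneg ht.le]
  have : t ^ q = t ^ (q - 2) * t * t := by
    rw [← Real.rpow_add_one ht.ne', ← Real.rpow_add_one ht.ne']
    ring_nf
  rw [this]
  ring

lemma continuous_abs_sub_rpow (hq : 1 < q) : Continuous fun x : ℝ × ℝ => |x.1 - x.2| ^ q :=
  (contDiff_abs_rpow hq).continuous.comp (by fun_prop)

lemma abs_sub_rpow_smul {t : ℝ} (ht : 0 < t) (x : ℝ × ℝ) :
    |(t • x).1 - (t • x).2| ^ q = t ^ q * |x.1 - x.2| ^ q := by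
  simp only [Prod.smul_fst, Prod.smul_snd, smul_eq_mul, ← mul_sub, abs_mul_rpow_of_nonneg ht.le]

lemma exists_abs_sub_rpow_le_bregmanDiv (hq : 1 < q) {ε : ℝ} (hε : 0 < ε) :
    ∃ C, 0 ≤ C ∧ ∀ a b : ℝ,
      |a - b| ^ q ≤ ε * |a| ^ q + C * bregmanDiv (fun x => |x| ^ q) a b := by
  have hB := strictConvexOn_abs_rpow hq
  have hd := (contDiff_abs_rpow hq).differentiable one_ne_zero
  have hdiag : ∀ x : ℝ × ℝ, x ≠ 0 → bregmanDiv (fun x => |x| ^ q) x.1 x.2 = 0 →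
      |x.1 - x.2| ^ q ≤ 0 ∧ 0 < |x.1| ^ q := by
    intro x hx hGx
    have h12 : x.1 = x.2 := by_contra fun h => (hB.bregmanDiv_pos hd h).ne' hGx
    have h1 : x.1 ≠ 0 := fun h => hx (Prod.ext h (h12 ▸ h))
    exact ⟨by simp [h12, Real.zero_rpow (by linarith : q ≠ 0)], by positivity⟩
  obtain ⟨C, hC0, hC⟩ := exists_le_mul_add_mul_of_homogeneous (E := ℝ × ℝ)
    (F := fun x => |x.1 - x.2| ^ q) (G := fun x => bregmanDiv (fun x => |x| ^ q) x.1 x.2)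
    (H := fun x => |x.1| ^ q) (by linarith) (continuous_abs_sub_rpow hq)
    (contDiff_abs_rpow hq).continuous_bregmanDiv
    ((contDiff_abs_rpow hq).continuous.comp continuous_fst)
    (fun t ht x => abs_sub_rpow_smul ht x)
    (fun t ht x => bregmanDiv_abs_rpow_mul hq ht x.1 x.2)
    (fun t ht x => abs_mul_rpow_of_nonneg ht.le x.1)
    (fun x => hB.bregmanDiv_nonneg hd x.1 x.2) (fun x => by positivity) hdiag hε
  exact ⟨C, hC0, fun a b => hC (a, b)⟩

lemma exists_bregmanDiv_le_abs_sub_rpow (hq : 1 < q) {ε : ℝ} (hε : 0 < ε) :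
    ∃ C, 0 ≤ C ∧ ∀ a b : ℝ,
      bregmanDiv (fun x => |x| ^ q) a b ≤ ε * |a| ^ q + C * |a - b| ^ q := by
  have hdiag : ∀ x : ℝ × ℝ, x ≠ 0 → |x.1 - x.2| ^ q = 0 →
      bregmanDiv (fun x => |x| ^ q) x.1 x.2 ≤ 0 ∧ 0 < |x.1| ^ q := by
    intro x hx hGx
    have h12 : x.1 = x.2 := by
      rw [Real.rpow_eq_zero (abs_nonneg _) (by linarith), abs_eq_zero, sub_eq_zero] at hGx
      exact hGx
    have h1 : x.1 ≠ 0 := fun h => hx (Prod.ext h (h12 ▸ h))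
    exact ⟨by simp [h12], by positivity⟩
  obtain ⟨C, hC0, hC⟩ := exists_le_mul_add_mul_of_homogeneous (E := ℝ × ℝ)
    (F := fun x => bregmanDiv (fun x => |x| ^ q) x.1 x.2) (G := fun x => |x.1 - x.2| ^ q)
    (H := fun x => |x.1| ^ q) (by linarith) (contDiff_abs_rpow hq).continuous_bregmanDiv
    (continuous_abs_sub_rpow hq) ((contDiff_abs_rpow hq).continuous.comp continuous_fst)
    (fun t ht x => bregmanDiv_abs_rpow_mul hq ht x.1 x.2)
    (fun t ht x => abs_sub_rpow_smul ht x)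
    (fun t ht x => abs_mul_rpow_of_nonneg ht.le x.1)
    (fun x => by positivity) (fun x => by positivity) hdiag hε
  exact ⟨C, hC0, fun a b => hC (a, b)⟩

end AbsRpow

lemma mul_div_add_one_le {c θ : ℝ} (hc : 0 ≤ c) (hθ : 0 ≤ θ) : c * (θ / (c + 1)) ≤ θ := by
  rw [mul_div_assoc', div_le_iff₀ (by positivity)]
  nlinarith

lemma eventually_lt_add_of_limsup_rpow_le {α : Type*} {l : Filter α} {x : α → ℝ} {A q ε : ℝ}
    (hq : 0 < q) (hx : ∀ n, 0 ≤ x n) (hA : 0 ≤ A)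
    (hbdd : IsBoundedUnder (· ≤ ·) l fun n => x n ^ (1 / q))
    (h : limsup (fun n => x n ^ (1 / q)) l ≤ A ^ (1 / q)) (hε : 0 < ε) :
    ∀ᶠ n in l, x n < A + ε := by
  have hlt : A ^ (1 / q) < (A + ε) ^ (1 / q) :=
    Real.rpow_lt_rpow hA (lt_add_of_pos_right A hε) (by positivity)
  filter_upwards [eventually_lt_of_limsup_lt (h.trans_lt hlt) hbdd] with n hn
  exact (Real.rpow_lt_rpow_iff (hx n) (by positivity) (by positivity)).1 hn

lemma tendsto_of_forall_approx {α : Type*} {l : Filter α} {a : α → ℝ} {a₀ : ℝ}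
    (h : ∀ δ > 0, ∃ (b : α → ℝ) (b₀ : ℝ), Tendsto b l (nhds b₀) ∧ |a₀ - b₀| ≤ δ ∧
      ∀ᶠ n in l, |a n - b n| ≤ δ) :
    Tendsto a l (nhds a₀) := by
  refine Metric.tendsto_nhds.2 fun ε hε => ?_
  obtain ⟨b, b₀, hb, hab₀, hab⟩ := h (ε / 4) (by positivity)
  filter_upwards [Metric.tendsto_nhds.1 hb (ε / 4) (by positivity), hab] with n hbn habn
  rw [Real.dist_eq] at hbn ⊢
  rw [abs_le] at hab₀ habn
  rw [abs_lt] at hbn ⊢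
  constructor <;> linarith

lemma integral_le_mul_add_mul {α : Type*} [MeasurableSpace α] {μ : Measure α} {F G H : α → ℝ}
    {ε C : ℝ} (hF : Integrable F μ) (hH : Integrable H μ) (hG : Integrable G μ)
    (h : ∀ x, F x ≤ ε * H x + C * G x) : ∫ x, F x ∂μ ≤ ε * ∫ x, H x ∂μ + C * ∫ x, G x ∂μ := by
  rw [← integral_const_mul, ← integral_const_mul,
    ← integral_add (hH.const_mul ε) (hG.const_mul C)]
  exact integral_mono hF ((hH.const_mul ε).add (hG.const_mul C)) h

lemma MeasureTheory.MemLp.integrable_abs_rpow {α : Type*} [MeasurableSpace α] {μ : Measure α}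
    {f : α → ℝ} {q : ℝ} (hq : 0 < q) (hf : MemLp f (ENNReal.ofReal q) μ) :
    Integrable (fun x => |f x| ^ q) μ := by
  simpa [ENNReal.toReal_ofReal hq.le] using
    hf.integrable_norm_rpow (by simpa using hq) ENNReal.ofReal_ne_top

lemma abs_integral_mul_le {α : Type*} [MeasurableSpace α] {μ : Measure α} {f g : α → ℝ}
    {p q : ℝ} (hpq : p.HolderConjugate q) (hf : MemLp f (ENNReal.ofReal p) μ)
    (hg : MemLp g (ENNReal.ofReal q) μ) :
    |∫ x, f x * g x ∂μ| ≤ (∫ x, |f x| ^ p ∂μ) ^ (1 / p) * (∫ x, |g x| ^ q ∂μ) ^ (1 / q) := by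
  refine (abs_integral_le_integral_abs).trans ?_
  simpa [abs_mul] using integral_mul_norm_le_Lp_mul_Lq hpq hf hg

lemma MeasureTheory.MemLp.exists_continuous_integral_abs_sub_rpow_le {Z : Type*} [MetricSpace Z]
    [MeasurableSpace Z] [BorelSpace Z] {μ : Measure Z} [IsFiniteMeasure μ] {f : Z → ℝ}
    {q ρ : ℝ} (hq : 0 < q) (hf : MemLp f (ENNReal.ofReal q) μ) (hρ : 0 < ρ) :
    ∃ φ : Z → ℝ, Continuous φ ∧ ∫ x, |f x - φ x| ^ q ∂μ ≤ ρ := by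
  obtain ⟨g, hfg, hg⟩ := hf.exists_boundedContinuous_eLpNorm_sub_le ENNReal.ofReal_ne_top
    (ε := ENNReal.ofReal (ρ ^ (1 / q))) (by simp; positivity)
  refine ⟨g, g.continuous, ?_⟩
  rw [(hf.sub hg).eLpNorm_eq_integral_rpow_norm (by simpa using hq) ENNReal.ofReal_ne_top,
    ENNReal.ofReal_le_ofReal_iff (by positivity), ENNReal.toReal_ofReal hq.le, ← one_div,
    Real.rpow_le_rpow_iff (integral_nonneg fun x => by positivity) hρ.le (by positivity)] at hfg
  simpa using hfg

lemma LpStrongConv.eventually_integral_abs_rpow_lt {Z : Type*} [TopologicalSpace Z]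
    [MeasurableSpace Z] {mn : ℕ → Measure Z} {m : Measure Z} {u : ℕ → Z → ℝ} {uL : Z → ℝ}
    {q ε : ℝ} (hq : 0 < q) (hus : LpStrongConv q mn m u uL) (hε : 0 < ε) :
    ∀ᶠ n in atTop, ∫ x, |u n x| ^ q ∂(mn n) < ∫ x, |uL x| ^ q ∂m + ε :=
  eventually_lt_add_of_limsup_rpow_le hq (fun n => integral_nonneg fun x => by positivity)
    (integral_nonneg fun x => by positivity) (isBoundedUnder_of hus.1.1) hus.2 hε

section CompactSpace

variable {Z : Type*} [TopologicalSpace Z] [CompactSpace Z] [MeasurableSpace Z]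
  [BorelSpace Z] {μ : Measure Z} [IsFiniteMeasure μ] {q : ℝ} {f φ : Z → ℝ}

lemma Continuous.memLp_of_compactSpace (hφ : Continuous φ) (p : ℝ≥0∞) : MemLp φ p μ :=
  (BoundedContinuousFunction.mkOfCompact ⟨φ, hφ⟩).memLp_top.mono_exponent le_top

lemma Continuous.integrable_of_compactSpace (hφ : Continuous φ) : Integrable φ μ :=
  memLp_one_iff_integrable.1 (hφ.memLp_of_compactSpace 1)

lemma integrable_and_integral_bregmanDiv_abs_rpow (hq : 1 < q)
    (hf : MemLp f (ENNReal.ofReal q) μ) (hφ : Continuous φ) :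
    Integrable (fun x => bregmanDiv (fun x => |x| ^ q) (f x) (φ x)) μ ∧
    ∫ x, bregmanDiv (fun x => |x| ^ q) (f x) (φ x) ∂μ =
      ∫ x, |f x| ^ q ∂μ - ∫ x, |φ x| ^ q ∂μ - ∫ x, deriv (fun x => |x| ^ q) (φ x) * f x ∂μ
        + ∫ x, deriv (fun x => |x| ^ q) (φ x) * φ x ∂μ := by
  have hψ : Continuous fun x => deriv (fun x => |x| ^ q) (φ x) :=
    ((contDiff_abs_rpow hq).continuous_deriv le_rfl).comp hφ
  have h₁ : Integrable (fun x => |f x| ^ q) μ := hf.integrable_abs_rpow (by linarith)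
  have h₂ : Integrable (fun x => |φ x| ^ q) μ :=
    ((contDiff_abs_rpow hq).continuous.comp hφ).integrable_of_compactSpace
  have h₃ : Integrable (fun x => deriv (fun x => |x| ^ q) (φ x) * f x) μ :=
    (hf.integrable (by simpa using hq.le)).mul_of_top_right (hψ.memLp_of_compactSpace ⊤)
  have h₄ : Integrable (fun x => deriv (fun x => |x| ^ q) (φ x) * φ x) μ :=
    (hψ.mul hφ).integrable_of_compactSpace
  have heq : (fun x => bregmanDiv (fun x => |x| ^ q) (f x) (φ x)) = fun x =>
      |f x| ^ q - |φ x| ^ q - deriv (fun x => |x| ^ q) (φ x) * f x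
        + deriv (fun x => |x| ^ q) (φ x) * φ x := by
    ext x; simp only [bregmanDiv]; ring
  have h₁₂ : Integrable (fun x => |f x| ^ q - |φ x| ^ q) μ := h₁.sub h₂
  have h₁₂₃ : Integrable (fun x => |f x| ^ q - |φ x| ^ q
      - deriv (fun x => |x| ^ q) (φ x) * f x) μ := h₁₂.sub h₃
  rw [heq, integral_add h₁₂₃ h₄, integral_sub h₁₂ h₃, integral_sub h₁ h₂]
  exact ⟨h₁₂₃.add h₄, rfl⟩

lemma abs_integral_mul_sub_integral_mul_le {p η M : ℝ} {g : Z → ℝ} (hqp : q.HolderConjugate p)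
    (hf : MemLp f (ENNReal.ofReal q) μ) (hφ : Continuous φ) (hg : MemLp g (ENNReal.ofReal p) μ)
    (hη : 0 ≤ η) (hfφ : ∫ x, |f x - φ x| ^ q ∂μ ≤ η ^ q)
    (hgM : (∫ x, |g x| ^ p ∂μ) ^ (1 / p) ≤ M) :
    |∫ x, f x * g x ∂μ - ∫ x, φ x * g x ∂μ| ≤ η * M := by
  have := hqp.ennrealOfReal
  have hφq : MemLp φ (ENNReal.ofReal q) μ := hφ.memLp_of_compactSpace _
  have hfg : Integrable (fun x => f x * g x) μ := hf.integrable_mul hg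
  have hφg : Integrable (fun x => φ x * g x) μ := hφq.integrable_mul hg
  rw [← integral_sub hfg hφg]
  simp_rw [← sub_mul]
  refine (abs_integral_mul_le hqp (hf.sub hφq) hg).trans (mul_le_mul ?_ hgM (by positivity) hη)
  calc (∫ x, |(f - φ) x| ^ q ∂μ) ^ (1 / q) ≤ (η ^ q) ^ (1 / q) :=
        Real.rpow_le_rpow (integral_nonneg fun x => by positivity) hfφ hqp.one_div_pos.le
    _ = η := by rw [one_div, Real.rpow_rpow_inv hη hqp.pos.ne']

variable {mn : ℕ → Measure Z} {m : Measure Z} [∀ n, IsFiniteMeasure (mn n)] [IsFiniteMeasure m]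
  {u : ℕ → Z → ℝ} {uL : Z → ℝ}

lemma LpStrongConv.eventually_integral_bregmanDiv_lt (hw : WeakConvMeasures mn m) (hq : 1 < q)
    (hu : ∀ n, MemLp (u n) (ENNReal.ofReal q) (mn n)) (huL : MemLp uL (ENNReal.ofReal q) m)
    (hus : LpStrongConv q mn m u uL) {φ : Z → ℝ} (hφ : Continuous φ) {ε : ℝ} (hε : 0 < ε) :
    ∀ᶠ n in atTop, ∫ x, bregmanDiv (fun x => |x| ^ q) (u n x) (φ x) ∂(mn n) <
      ∫ x, bregmanDiv (fun x => |x| ^ q) (uL x) (φ x) ∂m + ε := by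
  -- Apart from `∫ |u n| ^ q`, every term of the integral pairs `mn n` or `u n • mn n` with a
  -- continuous function.
  have hψ : Continuous fun x => deriv (fun x => |x| ^ q) (φ x) :=
    ((contDiff_abs_rpow hq).continuous_deriv le_rfl).comp hφ
  have hrest := (((hw (fun x => |φ x| ^ q) ((contDiff_abs_rpow hq).continuous.comp hφ)).neg.sub
    (hus.1.2 _ hψ)).add
      (hw (fun x => deriv (fun x => |x| ^ q) (φ x) * φ x) (hψ.mul hφ))).eventually
        (gt_mem_nhds (lt_add_of_pos_right _ (half_pos hε)))
  filter_upwards [hus.eventually_integral_abs_rpow_lt (by linarith) (half_pos hε), hrest]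
    with n hn hrestn
  rw [(integrable_and_integral_bregmanDiv_abs_rpow hq (hu n) hφ).2,
    (integrable_and_integral_bregmanDiv_abs_rpow hq huL hφ).2]
  linarith

end CompactSpace

section CompactMetricSpace

variable {Z : Type*} [MetricSpace Z] [CompactSpace Z] [MeasurableSpace Z] [BorelSpace Z]

lemma MeasureTheory.MemLp.exists_continuous_integral_abs_sub_rpow_le_and_bregmanDiv_le
    {μ : Measure Z} [IsFiniteMeasure μ] {f : Z → ℝ} {q η θ : ℝ} (hq : 1 < q)
    (hf : MemLp f (ENNReal.ofReal q) μ) (hη : 0 < η) (hθ : 0 < θ) :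
    ∃ φ : Z → ℝ, Continuous φ ∧ ∫ x, |f x - φ x| ^ q ∂μ ≤ η ∧
      ∫ x, bregmanDiv (fun x => |x| ^ q) (f x) (φ x) ∂μ ≤ θ := by
  set A := ∫ x, |f x| ^ q ∂μ
  have hA : 0 ≤ A := integral_nonneg fun x => by positivity
  obtain ⟨C, hC0, hC⟩ := exists_bregmanDiv_le_abs_sub_rpow hq (ε := θ / 2 / (A + 1))
    (by positivity)
  obtain ⟨φ, hφ, hfφ⟩ := hf.exists_continuous_integral_abs_sub_rpow_le (by linarith)
    (ρ := min η (θ / 2 / (C + 1))) (by positivity)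
  refine ⟨φ, hφ, hfφ.trans (min_le_left _ _), ?_⟩
  have hsub : Integrable (fun x => |f x - φ x| ^ q) μ :=
    (hf.sub (hφ.memLp_of_compactSpace _)).integrable_abs_rpow (by linarith)
  calc ∫ x, bregmanDiv (fun x => |x| ^ q) (f x) (φ x) ∂μ
      ≤ θ / 2 / (A + 1) * A + C * ∫ x, |f x - φ x| ^ q ∂μ :=
        integral_le_mul_add_mul (integrable_and_integral_bregmanDiv_abs_rpow hq hf hφ).1
          (hf.integrable_abs_rpow (by linarith)) hsub fun x => hC _ _
    _ ≤ A * (θ / 2 / (A + 1)) + C * (θ / 2 / (C + 1)) := by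
        rw [mul_comm]
        gcongr
        exact hfφ.trans (min_le_right _ _)
    _ ≤ θ / 2 + θ / 2 := by
        gcongr <;> exact mul_div_add_one_le (by assumption) (by positivity)
    _ = θ := add_halves θ

variable {mn : ℕ → Measure Z} {m : Measure Z} [∀ n, IsFiniteMeasure (mn n)] [IsFiniteMeasure m]
  {q : ℝ} {u : ℕ → Z → ℝ} {uL : Z → ℝ}

lemma LpStrongConv.exists_continuous_integral_abs_sub_rpow_le (hw : WeakConvMeasures mn m)
    (hq : 1 < q) (hu : ∀ n, MemLp (u n) (ENNReal.ofReal q) (mn n))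
    (huL : MemLp uL (ENNReal.ofReal q) m) (hus : LpStrongConv q mn m u uL) {η : ℝ} (hη : 0 < η) :
    ∃ φ : Z → ℝ, Continuous φ ∧ ∫ x, |uL x - φ x| ^ q ∂m ≤ η ∧
      ∀ᶠ n in atTop, ∫ x, |u n x - φ x| ^ q ∂(mn n) ≤ η := by
  set A := ∫ x, |uL x| ^ q ∂m
  have hA : 0 ≤ A := integral_nonneg fun x => by positivity
  obtain ⟨C, hC0, hC⟩ := exists_abs_sub_rpow_le_bregmanDiv hq (ε := η / 2 / (A + 1))
    (by positivity)
  obtain ⟨φ, hφ, huLφ, hbreg⟩ :=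
    huL.exists_continuous_integral_abs_sub_rpow_le_and_bregmanDiv_le hq hη
      (θ := η / 4 / (C + 1)) (by positivity)
  refine ⟨φ, hφ, huLφ, ?_⟩
  filter_upwards [hus.eventually_integral_abs_rpow_lt (by linarith) one_pos,
    hus.eventually_integral_bregmanDiv_lt hw hq hu huL hφ (ε := η / 4 / (C + 1)) (by positivity)]
    with n hun hbregn
  have hsub : Integrable (fun x => |u n x - φ x| ^ q) (mn n) :=
    ((hu n).sub (hφ.memLp_of_compactSpace _)).integrable_abs_rpow (by linarith)
  calc ∫ x, |u n x - φ x| ^ q ∂(mn n)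
      ≤ η / 2 / (A + 1) * ∫ x, |u n x| ^ q ∂(mn n)
          + C * ∫ x, bregmanDiv (fun x => |x| ^ q) (u n x) (φ x) ∂(mn n) :=
        integral_le_mul_add_mul hsub ((hu n).integrable_abs_rpow (by linarith))
          (integrable_and_integral_bregmanDiv_abs_rpow hq (hu n) hφ).1 fun x => hC _ _
    _ ≤ (A + 1) * (η / 2 / (A + 1)) + C * (η / 2 / (C + 1)) := by
        rw [mul_comm _ (∫ x, |u n x| ^ q ∂(mn n))]
        have : η / 4 / (C + 1) + η / 4 / (C + 1) = η / 2 / (C + 1) := by ring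
        gcongr
        linarith
    _ ≤ η / 2 + η / 2 := by
        gcongr
        · rw [mul_div_cancel₀ _ (by positivity)]
        · exact mul_div_add_one_le hC0 (by positivity)
    _ = η := add_halves η

end CompactMetricSpace

theorem tendsto_integral_mul_of_strong_weak_general
    {Z : Type*} [MetricSpace Z] [CompactSpace Z] [MeasurableSpace Z] [BorelSpace Z]
    (mn : ℕ → Measure Z) (m : Measure Z)
    [∀ n, IsFiniteMeasure (mn n)] [IsFiniteMeasure m]
    (hw : WeakConvMeasures mn m)
    (p q : ℝ) (hq : 1 < q) (hpq : 1 / p + 1 / q = 1)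
    (u : ℕ → Z → ℝ) (uL : Z → ℝ) (v : ℕ → Z → ℝ) (vL : Z → ℝ)
    (hu : ∀ n, MemLp (u n) (ENNReal.ofReal q) (mn n))
    (huL : MemLp uL (ENNReal.ofReal q) m)
    (hv : ∀ n, MemLp (v n) (ENNReal.ofReal p) (mn n))
    (hvL : MemLp vL (ENNReal.ofReal p) m)
    (hus : LpStrongConv q mn m u uL)
    (hvw : LpWeakConv p mn m v vL) :
    Tendsto (fun n => ∫ x, u n x * v n x ∂(mn n)) atTop
      (nhds (∫ x, uL x * vL x ∂m)) := by
  have hqp : q.HolderConjugate p :=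
    Real.holderConjugate_iff.2 ⟨hq, by simpa only [one_div, add_comm] using hpq⟩
  obtain ⟨⟨Mv, hMv⟩, hvweak⟩ := hvw
  set M := max Mv ((∫ x, |vL x| ^ p ∂m) ^ (1 / p))
  have hM : 0 ≤ M := le_max_of_le_right (by positivity)
  refine tendsto_of_forall_approx fun δ hδ => ?_
  obtain ⟨φ, hφ, huLφ, huφ⟩ :=
    hus.exists_continuous_integral_abs_sub_rpow_le hw hq hu huL (η := (δ / (M + 1)) ^ q)
      (by positivity)
  have hδM : δ / (M + 1) * M ≤ δ := by
    rw [mul_comm]; exact mul_div_add_one_le hM hδ.le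
  refine ⟨fun n => ∫ x, φ x * v n x ∂(mn n), ∫ x, φ x * vL x ∂m, hvweak φ hφ,
    (abs_integral_mul_sub_integral_mul_le hqp huL hφ hvL (by positivity) huLφ
      (le_max_right _ _)).trans hδM, ?_⟩
  filter_upwards [huφ] with n hn
  exact (abs_integral_mul_sub_integral_mul_le hqp (hu n) hφ (hv n) (by positivity) hn
    ((hMv n).trans (le_max_left _ _))).trans hδM

/-- If `u n → uL` `L^q`-strongly and `v n → vL` `L^p`-weakly, `1/p + 1/q = 1`, along a
weakly converging sequence of finite Borel measures on a compact metric space, then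
`∫ u n · v n d(mn n) → ∫ uL · vL dm`. -/
theorem tendsto_integral_mul_of_strong_weak
    {Z : Type*} [MetricSpace Z] [CompactSpace Z] [MeasurableSpace Z] [BorelSpace Z]
    (mn : ℕ → Measure Z) (m : Measure Z)
    [∀ n, IsFiniteMeasure (mn n)] [IsFiniteMeasure m]
    (hw : WeakConvMeasures mn m)
    (p q : ℝ) (hp : 1 < p) (hq : 1 < q) (hpq : 1 / p + 1 / q = 1)
    (u : ℕ → Z → ℝ) (uL : Z → ℝ) (v : ℕ → Z → ℝ) (vL : Z → ℝ)
    (humeas : ∀ n, Measurable (u n)) (huLmeas : Measurable uL)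
    (hvmeas : ∀ n, Measurable (v n)) (hvLmeas : Measurable vL)
    (hu : ∀ n, MemLp (u n) (ENNReal.ofReal q) (mn n))
    (huL : MemLp uL (ENNReal.ofReal q) m)
    (hv : ∀ n, MemLp (v n) (ENNReal.ofReal p) (mn n))
    (hvL : MemLp vL (ENNReal.ofReal p) m)
    (hus : LpStrongConv q mn m u uL)
    (hvw : LpWeakConv p mn m v vL) :
    Tendsto (fun n => ∫ x, u n x * v n x ∂(mn n)) atTop
      (nhds (∫ x, uL x * vL x ∂m)) :=
  tendsto_integral_mul_of_strong_weak_general mn m hw p q hq hpq u uL v vL hu huL hv hvL hus hvw
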